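/- Consider a commutative diagram of abelian groups with exact rows A → B → C → D and A' → B' → C' → D', and vertical homomorphisms a : A → A', b : B → B', c : C → C', d : D → D' making the diagram commute. If the cokernel of a, the cokernel of c, and the kernel of d are all finite, then the cokernel of b is finite. -/

import Mathlib

/-!
Pass to subgroups of `B'` and show that `im b` has finite index in `B'` along the chain
`im b ≤ im b + im f' ≤ g'⁻¹(im c) ≤ B'`. The last step has index at most `|coker c|`, and the
first is a quotient of `coker a`. For the middle step, exactness of the bottom row gives
`im b + im f' = g'⁻¹(c(im g))`, while `g'⁻¹(im c) ⊆ g'⁻¹(c(M))` with `M = c⁻¹(im g')`; so it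
suffices that `im g = ker h` has finite index in `M`, and indeed `h` maps `M` into `ker d`.
-/

namespace AddSubgroup

variable {G G' : Type*} [AddGroup G] [AddGroup G']

theorem relIndex_sup_range {A : Type*} [AddGroup A] (H : AddSubgroup G) [H.Normal] (f : A →+ G) :
    H.relIndex (H ⊔ f.range) = (H.comap f).index := by
  rw [relIndex_sup_left, index_comap]

theorem relIndex_map_ne_zero (f : G →+ G') {H K : AddSubgroup G} (hHK : H.relIndex K ≠ 0) :
    (H.map f).relIndex (K.map f) ≠ 0 := by
  rw [← relIndex_comap]
  exact ne_zero_of_dvd_ne_zero hHK (relIndex_dvd_of_le_left K (le_comap_map f H))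

theorem relIndex_ker_ne_zero {f : G →+ G'} {K : AddSubgroup G} {N : AddSubgroup G'} [Finite N]
    (hKN : K.map f ≤ N) : f.ker.relIndex K ≠ 0 := by
  have : Finite (K.map f) := Finite.of_injective _ (inclusion_injective hKN)
  rw [relIndex_ker]
  exact Nat.card_pos.ne'

end AddSubgroup

open AddSubgroup in
theorem relIndex_sup_ker_comap_range_ne_zero {B C D B' C' D' : Type*}
    [AddCommGroup B] [AddCommGroup C] [AddCommGroup D]
    [AddCommGroup B'] [AddCommGroup C'] [AddCommGroup D']
    {g : B →+ C} {h : C →+ D} {g' : B' →+ C'} {h' : C' →+ D'}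
    {b : B →+ B'} {c : C →+ C'} {d : D →+ D'}
    (comm₂ : ∀ x : B, c (g x) = g' (b x)) (comm₃ : ∀ x : C, d (h x) = h' (c x))
    (hexC : Function.Exact g h) (hexC' : Function.Exact g' h') [Finite d.ker] :
    (b.range ⊔ g'.ker).relIndex (c.range.comap g') ≠ 0 := by
  have hM : g.range.relIndex (g'.range.comap c) ≠ 0 := by
    rw [← hexC.addMonoidHom_ker_eq]
    refine relIndex_ker_ne_zero (N := d.ker) ?_
    rintro _ ⟨x, ⟨y, hy⟩, rfl⟩
    rw [AddMonoidHom.mem_ker, comm₃, ← hy, hexC'.apply_apply_eq_zero]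
  have hrange : b.range.map g' = g.range.map c := by
    rw [← AddMonoidHom.range_comp, ← AddMonoidHom.range_comp]
    congr 1
    ext x
    exact (comm₂ x).symm
  have hle : c.range.comap g' ≤ ((g'.range.comap c).map c).comap g' := by
    rintro y ⟨x, hx⟩
    exact ⟨x, ⟨y, hx.symm⟩, hx⟩
  rw [← comap_map_eq, hrange]
  exact fun h0 ↦ relIndex_comap_ne_zero g' (relIndex_map_ne_zero c hM)
    (relIndex_eq_zero_of_le_right hle h0)

theorem coker_finite_of_four_lemma_general {A B C D A' B' C' D' : Type*}
    [AddCommGroup A] [AddCommGroup B] [AddCommGroup C] [AddCommGroup D]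
    [AddCommGroup A'] [AddCommGroup B'] [AddCommGroup C'] [AddCommGroup D']
    (f : A →+ B) (g : B →+ C) (h : C →+ D)
    (f' : A' →+ B') (g' : B' →+ C') (h' : C' →+ D')
    (a : A →+ A') (b : B →+ B') (c : C →+ C') (d : D →+ D')
    (comm₁ : ∀ x : A, b (f x) = f' (a x))
    (comm₂ : ∀ x : B, c (g x) = g' (b x))
    (comm₃ : ∀ x : C, d (h x) = h' (c x))
    (hexC : Function.Exact ⇑g ⇑h)
    (hexB' : Function.Exact ⇑f' ⇑g') (hexC' : Function.Exact ⇑g' ⇑h')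
    (hcoka : Finite (A' ⧸ a.range)) (hcokc : Finite (C' ⧸ c.range))
    (hkerd : Finite d.ker) :
    Finite (B' ⧸ b.range) := by
  open AddSubgroup in
  have hA : b.range.relIndex (b.range ⊔ f'.range) ≠ 0 := by
    have ha : a.range ≤ b.range.comap f' := by
      rintro _ ⟨x, rfl⟩
      exact ⟨f x, comm₁ x⟩
    rw [relIndex_sup_range]
    exact ne_zero_of_dvd_ne_zero (index_ne_zero_iff_finite.mpr hcoka) (index_dvd_of_le ha)
  have hD : (b.range ⊔ f'.range).relIndex (c.range.comap g') ≠ 0 := by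
    rw [← hexB'.addMonoidHom_ker_eq]
    exact relIndex_sup_ker_comap_range_ne_zero comm₂ comm₃ hexC hexC'
  have hC : (c.range.comap g').relIndex ⊤ ≠ 0 := by
    rw [← comap_top g']
    exact relIndex_comap_ne_zero g' (by rwa [relIndex_top_right, index_ne_zero_iff_finite])
  rw [← index_ne_zero_iff_finite, ← relIndex_top_right]
  exact relIndex_ne_zero_trans hA (relIndex_ne_zero_trans hD hC)

/-- Four-lemma style finiteness statement: given a commutative diagram of abelian groups
with exact rows `A → B → C → D` and `A' → B' → C' → D'` and vertical maps `a, b, c, d`,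
if `coker a`, `coker c` and `ker d` are finite, then `coker b` is finite. -/
theorem coker_finite_of_four_lemma {A B C D A' B' C' D' : Type*}
    [AddCommGroup A] [AddCommGroup B] [AddCommGroup C] [AddCommGroup D]
    [AddCommGroup A'] [AddCommGroup B'] [AddCommGroup C'] [AddCommGroup D']
    (f : A →+ B) (g : B →+ C) (h : C →+ D)
    (f' : A' →+ B') (g' : B' →+ C') (h' : C' →+ D')
    (a : A →+ A') (b : B →+ B') (c : C →+ C') (d : D →+ D')
    (comm₁ : ∀ x : A, b (f x) = f' (a x))
    (comm₂ : ∀ x : B, c (g x) = g' (b x))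
    (comm₃ : ∀ x : C, d (h x) = h' (c x))
    (hexB : Function.Exact ⇑f ⇑g) (hexC : Function.Exact ⇑g ⇑h)
    (hexB' : Function.Exact ⇑f' ⇑g') (hexC' : Function.Exact ⇑g' ⇑h')
    (hcoka : Finite (A' ⧸ a.range)) (hcokc : Finite (C' ⧸ c.range))
    (hkerd : Finite d.ker) :
    Finite (B' ⧸ b.range) :=
  coker_finite_of_four_lemma_general f g h f' g' h' a b c d comm₁ comm₂ comm₃ hexC hexB' hexC' hcoka
    hcokc hkerd
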